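/- When a point x_g's assignment is shifted from cluster a to cluster b by an amount α ∈ [0,1], the change in the optimal clustering loss equals Δ_α(g,a,b) = α w_g (D(x_g, c_b) − D(x_g, c_a)) − ((s_a − α w_g) D(c'_a, c_a) + (s_b + α w_g) D(c'_b, c_b)), where c_a, c_b are the weighted-mean centers before the change, c'_a, c'_b the weighted-mean centers after, and s_a, s_b the weight sums of clusters a and b before the change. -/

import Mathlib

/-!
Since `D_φ(x, y)` is affine in `x` up to the term `φ x`, the weighted loss of a cluster around any
center `y` exceeds its loss around the weighted mean `c` by exactly `s · D_φ(c, y)` (the Bregman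
bias–variance identity). Shifting weight `α w_g` from cluster `a` to cluster `b` leaves the other
clusters untouched; for `a` and `b`, first evaluating the new weights against the old center
changes the loss by `∓ α w_g D_φ(x_g, c)`, and then moving the center to the new mean `c'`
changes it by `- s' D_φ(c', c)`.
-/

open Finset

section Bregman

variable {R E ι : Type*} [Field R] [AddCommGroup E] [Module R E]

def bregmanDiv (φ : E → R) (f' : E → E →ₗ[R] R) (x y : E) : R :=
  φ x - φ y - f' y (x - y)

variable (φ : E → R) (f' : E → E →ₗ[R] R) (t : Finset ι) (q : ι → R) (x : ι → E)

theorem sum_mul_bregmanDiv (y : E) :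
    ∑ i ∈ t, q i * bregmanDiv φ f' (x i) y
      = ∑ i ∈ t, q i * φ (x i) - (∑ i ∈ t, q i) * φ y
        - f' y (∑ i ∈ t, q i • x i - (∑ i ∈ t, q i) • y) := by
  simp only [bregmanDiv, mul_sub, sum_sub_distrib, ← sum_mul, map_sub, map_sum, map_smul,
    smul_eq_mul]

theorem sum_smul_eq_sum_smul_centerMass (hq : ∑ i ∈ t, q i ≠ 0) :
    ∑ i ∈ t, q i • x i = (∑ i ∈ t, q i) • t.centerMass q x :=
  (smul_inv_smul₀ hq _).symm

theorem sum_mul_bregmanDiv_eq_centerMass_add (hq : ∑ i ∈ t, q i ≠ 0) (y : E) :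
    ∑ i ∈ t, q i * bregmanDiv φ f' (x i) y
      = ∑ i ∈ t, q i * bregmanDiv φ f' (x i) (t.centerMass q x)
        + (∑ i ∈ t, q i) * bregmanDiv φ f' (t.centerMass q x) y := by
  rw [sum_mul_bregmanDiv, sum_mul_bregmanDiv, sum_smul_eq_sum_smul_centerMass t q x hq]
  simp only [bregmanDiv, ← smul_sub, sub_self, map_zero, map_smul, smul_eq_mul]
  ring

theorem sum_mul_bregmanDiv_of_eq_add_single [DecidableEq ι] {q' : ι → R} {g : ι} (hg : g ∈ t)
    {β : R} (hq' : q' = q + Pi.single g β) (y : E) :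
    ∑ i ∈ t, q' i * bregmanDiv φ f' (x i) y
      = ∑ i ∈ t, q i * bregmanDiv φ f' (x i) y + β * bregmanDiv φ f' (x g) y := by
  simp only [hq', Pi.add_apply, add_mul, sum_add_distrib, Pi.single_apply, ite_mul, zero_mul,
    sum_ite_eq', hg, if_true]

theorem sum_mul_bregmanDiv_centerMass_sub_of_eq_add_single [DecidableEq ι] {q' : ι → R} {g : ι}
    (hg : g ∈ t) {β : R} (hq' : q' = q + Pi.single g β) (hs' : ∑ i ∈ t, q i + β ≠ 0) :
    ∑ i ∈ t, q' i * bregmanDiv φ f' (x i) (t.centerMass q' x)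
      - ∑ i ∈ t, q i * bregmanDiv φ f' (x i) (t.centerMass q x)
      = β * bregmanDiv φ f' (x g) (t.centerMass q x)
        - (∑ i ∈ t, q i + β) * bregmanDiv φ f' (t.centerMass q' x) (t.centerMass q x) := by
  have hsum : ∑ i ∈ t, q' i = ∑ i ∈ t, q i + β := by
    simp only [hq', Pi.add_apply, sum_add_distrib, sum_pi_single', hg, if_true]
  have hdecomp :=
    sum_mul_bregmanDiv_eq_centerMass_add φ f' t q' x (hsum ▸ hs') (t.centerMass q x)
  rw [sum_mul_bregmanDiv_of_eq_add_single φ f' t q x hg hq', hsum] at hdecomp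
  linear_combination -hdecomp

end Bregman

theorem bregman_loss_change_of_shift_general {d K N : ℕ}
    (φ : (Fin d → ℝ) → ℝ)
    (f' : (Fin d → ℝ) → (Fin d → ℝ) →L[ℝ] ℝ)
    (D : (Fin d → ℝ) → (Fin d → ℝ) → ℝ)
    (hD : ∀ x y, D x y = φ x - φ y - f' y (x - y))
    (x : Fin N → (Fin d → ℝ))
    (w : Fin N → ℝ) (hw : ∀ n, 0 < w n)
    (P : Fin K → Fin N → ℝ)
    (g : Fin N) (a b : Fin K) (hab : a ≠ b)
    (α : ℝ) (hα0 : 0 ≤ α)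
    (Pnew : Fin K → Fin N → ℝ)
    (hPnew : ∀ k n, Pnew k n =
      if k = a ∧ n = g then P k n - α
      else if k = b ∧ n = g then P k n + α
      else P k n)
    (s : (Fin K → Fin N → ℝ) → Fin K → ℝ)
    (hs : ∀ Q k, s Q k = ∑ n, Q k n * w n)
    (cstar : (Fin K → Fin N → ℝ) → Fin K → (Fin d → ℝ))
    (hcstar : ∀ Q k, cstar Q k = (s Q k)⁻¹ • ∑ n, (Q k n * w n) • x n)
    (F : (Fin K → Fin N → ℝ) → ℝ)
    (hF : ∀ Q, F Q = ∑ k, ∑ n, Q k n * w n * D (x n) (cstar Q k))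
    (hpos : ∀ k, 0 < s P k) (hposa : 0 < s P a - α * w g) :
    F Pnew - F P =
      α * w g * (D (x g) (cstar P b) - D (x g) (cstar P a))
      - ((s P a - α * w g) * D (cstar Pnew a) (cstar P a)
         + (s P b + α * w g) * D (cstar Pnew b) (cstar P b)) := by
  set f'ₗ : (Fin d → ℝ) → (Fin d → ℝ) →ₗ[ℝ] ℝ := fun y ↦ f' y
  obtain rfl : D = bregmanDiv φ f'ₗ := funext₂ hD
  have hc : ∀ Q k, cstar Q k = univ.centerMass (fun n ↦ Q k n * w n) x := by
    intro Q k; rw [hcstar, hs]; rfl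
  have hrow : ∀ k, k ≠ a → k ≠ b → Pnew k = P k := fun k hka hkb ↦ by
    funext n; simp [hPnew, hka, hkb]
  have hrow_a :
      (fun n ↦ Pnew a n * w n) = (fun n ↦ P a n * w n) + Pi.single g (-(α * w g)) := by
    funext n; by_cases hn : n = g <;> simp [hPnew, hab, hn]; ring
  have hrow_b : (fun n ↦ Pnew b n * w n) = (fun n ↦ P b n * w n) + Pi.single g (α * w g) := by
    funext n; by_cases hn : n = g <;> simp [hPnew, hab.symm, hn]; ring
  have hsb : 0 < s P b + α * w g := add_pos_of_pos_of_nonneg (hpos b) (mul_nonneg hα0 (hw g).le)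
  have hchange_a := sum_mul_bregmanDiv_centerMass_sub_of_eq_add_single φ f'ₗ _ _ x (mem_univ g)
    hrow_a (by rw [← hs, ← sub_eq_add_neg]; exact hposa.ne')
  have hchange_b := sum_mul_bregmanDiv_centerMass_sub_of_eq_add_single φ f'ₗ _ _ x (mem_univ g)
    hrow_b (by rw [← hs]; exact hsb.ne')
  simp only [hF, hc, hs]
  rw [← sum_sub_distrib,
    Fintype.sum_eq_add a b hab fun k hk ↦ by rw [hrow k hk.1 hk.2, sub_self]]
  linear_combination hchange_a + hchange_b

/-- When point `g`'s assignment is shifted from cluster `a` to cluster `b`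
by an amount `α ∈ [0,1]`, the change in the optimal clustering loss equals
`Δ_α(g,a,b) = α w_g (D(x_g, c_b) − D(x_g, c_a))
  − ((s_a − α w_g) D(c'_a, c_a) + (s_b + α w_g) D(c'_b, c_b))`,
where `c_a, c_b` (resp. `c'_a, c'_b`) are the weighted-mean centers before (resp. after)
the change and `s_a, s_b` the weight sums before the change. -/
theorem bregman_loss_change_of_shift {d K N : ℕ}
    (dom : Set (Fin d → ℝ)) (hdom : Convex ℝ dom)
    (φ : (Fin d → ℝ) → ℝ) (hφ : StrictConvexOn ℝ dom φ)
    (f' : (Fin d → ℝ) → (Fin d → ℝ) →L[ℝ] ℝ)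
    (hdiff : ∀ y ∈ interior dom, HasFDerivAt φ (f' y) y)
    (D : (Fin d → ℝ) → (Fin d → ℝ) → ℝ)
    (hD : ∀ x y, D x y = φ x - φ y - f' y (x - y))
    (x : Fin N → (Fin d → ℝ)) (hx : ∀ n, x n ∈ dom)
    (w : Fin N → ℝ) (hw : ∀ n, 0 < w n)
    (P : Fin K → Fin N → ℝ) (hP : ∀ k n, 0 ≤ P k n)
    (g : Fin N) (a b : Fin K) (hab : a ≠ b)
    (α : ℝ) (hα0 : 0 ≤ α) (hα1 : α ≤ 1) (hαg : α ≤ P a g)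
    (Pnew : Fin K → Fin N → ℝ)
    (hPnew : ∀ k n, Pnew k n =
      if k = a ∧ n = g then P k n - α
      else if k = b ∧ n = g then P k n + α
      else P k n)
    (s : (Fin K → Fin N → ℝ) → Fin K → ℝ)
    (hs : ∀ Q k, s Q k = ∑ n, Q k n * w n)
    (cstar : (Fin K → Fin N → ℝ) → Fin K → (Fin d → ℝ))
    (hcstar : ∀ Q k, cstar Q k = (s Q k)⁻¹ • ∑ n, (Q k n * w n) • x n)
    (F : (Fin K → Fin N → ℝ) → ℝ)
    (hF : ∀ Q, F Q = ∑ k, ∑ n, Q k n * w n * D (x n) (cstar Q k))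
    (hpos : ∀ k, 0 < s P k) (hposa : 0 < s P a - α * w g)
    (hmeans : ∀ k, cstar P k ∈ interior dom ∧ cstar Pnew k ∈ interior dom) :
    F Pnew - F P =
      α * w g * (D (x g) (cstar P b) - D (x g) (cstar P a))
      - ((s P a - α * w g) * D (cstar Pnew a) (cstar P a)
         + (s P b + α * w g) * D (cstar Pnew b) (cstar P b)) :=
  bregman_loss_change_of_shift_general φ f' D hD x w hw P g a b hab α hα0 Pnew hPnew s hs cstar
    hcstar F hF hpos hposa
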